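/- arXiv:2109.01200 — 4 statements merged into one kernel-verified Lean document; each statement's English description precedes it below -/
import Mathlib

section
/- Let A ⊆ ℕ be finite with 0 ∈ A, and suppose A is a building block of a nonempty M ⊆ ℤ witnessed by the sequence (a_i)_{i∈ℤ}. Then for every i ∈ ℤ and every 0 ≤ n ≤ max(A) with a_{i+1} − a_i > max(A), one has n + a_i ∈ M if and only if n ∈ A. -/
open Filter ArithmeticFunction

open scoped Classical in
noncomputable def mobiusSum (M : Set ℤ) (N : ℕ) : ℝ :=
  (N : ℝ)⁻¹ * ∑ n ∈ Finset.Icc 1 N, if (n : ℤ) ∈ M then (moebius n : ℝ) else 0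

def MobiusOrtho (M : Set ℤ) : Prop := Tendsto (mobiusSum M) atTop (nhds 0)

def blockMax (A : Finset ℕ) : ℕ := A.sup (fun n => n)

def IsBuildingBlock (M : Set ℤ) (A : Finset ℕ) (a : ℤ → ℤ) : Prop :=
  0 ∈ A ∧ Monotone a ∧
    M = ⋃ i : ℤ, {x : ℤ | ∃ n ∈ A, x = (n : ℤ) + a i} ∧
    ∀ i : ℤ, ((blockMax A : ℤ) < a (i + 1) - a i ∨ a (i + 1) = a i)

open scoped Classical in
def IsAccc (M : Set ℤ) : Prop :=
  M = ∅ ∨ ∀ ε : ℝ, 0 < ε → ∃ k : ℕ, 0 < k ∧ ∀ N : ℕ,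
    ∃ A : Finset ℕ, ∃ a : ℤ → ℤ, ∃ D : Finset (ZMod k),
      IsBuildingBlock M A a ∧ N ≤ blockMax A ∧
      ((symmDiff ((Finset.Icc 0 (blockMax A)).filter (fun n => (n : ZMod k) ∈ D)) A).card : ℝ)
        < ε * (blockMax A : ℝ)

def KLRBody (ε : ℝ) (L₀ : ℕ) : Prop :=
  ∀ L : ℕ, L₀ ≤ L → ∀ q : ℕ, 1 ≤ q →
    (∑ p ∈ q.primeFactors, (1 : ℝ) / p) ≤
      (1 - ε) * ∑ p ∈ (Finset.range (L + 1)).filter Nat.Prime, (1 : ℝ) / p →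
    ∃ N₀ : ℕ, ∀ N : ℕ, N₀ ≤ N → ∃ z : ℕ, z < L * q ∧
      ∑ j ∈ Finset.range (N / (L * q) + 1), ∑ a ∈ Finset.range q,
        |∑ m ∈ (Finset.Ico (z + j * (L * q)) (z + (j + 1) * (L * q))).filter
            (fun m => m % q = a), (moebius m : ℝ)| ≤ ε * N

def KLR : Prop := ∀ ε : ℝ, 0 < ε → ε < 1 / 100 → ∃ L₀ : ℕ, KLRBody ε L₀

/-! Since the translation sequence moves only by zero steps or by jumps exceeding `max A`,
translates `A + a_j` with `a_j ≠ a_i` miss the window `[a_i, a_i + max A]`: those with `a_j < a_i`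
end below `a_i`, and, when `a_{i+1} - a_i > max A`, those with `a_j > a_i` start above the window. -/

namespace IsBuildingBlock

variable {M : Set ℤ} {A : Finset ℕ} {a : ℤ → ℤ}

theorem mem_iff (hb : IsBuildingBlock M A a) {x : ℤ} :
    x ∈ M ↔ ∃ j, ∃ m ∈ A, x = (m : ℤ) + a j := by
  rw [hb.2.2.1]
  simp only [Set.mem_iUnion, Set.mem_ofPred_eq]

theorem add_blockMax_lt_of_lt (hb : IsBuildingBlock M A a) {i j : ℤ} (h : a j < a i) :
    a j + blockMax A < a i := by
  have hji : j ≤ i := (hb.2.1.reflect_lt h).le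
  induction i, hji using Int.leInduction with
  | base => exact absurd h (lt_irrefl _)
  | succ k hjk ih =>
    rcases hb.2.2.2 k with hgap | hstep
    · have := hb.2.1 hjk
      omega
    · rw [hstep] at h ⊢
      exact ih h

end IsBuildingBlock

theorem stmt_5_general (M : Set ℤ) (A : Finset ℕ) (a : ℤ → ℤ)
    (hblock : IsBuildingBlock M A a) :
    ∀ i : ℤ, (blockMax A : ℤ) < a (i + 1) - a i →
      ∀ n : ℕ, n ≤ blockMax A → (((n : ℤ) + a i ∈ M) ↔ n ∈ A) := by
  intro i hi n hn
  refine ⟨fun hmem => ?_, fun hnA => hblock.mem_iff.2 ⟨i, n, hnA, rfl⟩⟩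
  obtain ⟨j, m, hmA, heq⟩ := hblock.mem_iff.1 hmem
  have hm : m ≤ blockMax A := Finset.le_sup (f := fun n => n) hmA
  rcases lt_trichotomy (a j) (a i) with hlt | hsame | hgt
  · have := hblock.add_blockMax_lt_of_lt hlt
    omega
  · obtain rfl : n = m := by omega
    exact hmA
  · have hij : i + 1 ≤ j := hblock.2.1.reflect_lt hgt
    have := hblock.2.1 hij
    omega

/-- If A is a building block of a nonempty M witnessed by (a_i), with a_i → ±∞,
then for every i with a_{i+1} - a_i > max A and every 0 ≤ n ≤ max A,
n + a_i ∈ M iff n ∈ A. -/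
theorem stmt_5 (M : Set ℤ) (hMne : M.Nonempty) (A : Finset ℕ) (a : ℤ → ℤ)
    (hblock : IsBuildingBlock M A a)
    (htop : Tendsto a atTop atTop) (hbot : Tendsto a atBot atBot) :
    ∀ i : ℤ, (blockMax A : ℤ) < a (i + 1) - a i →
      ∀ n : ℕ, n ≤ blockMax A → (((n : ℤ) + a i ∈ M) ↔ n ∈ A) :=
  stmt_5_general M A a hblock
end

section
/- Let v_n be the generating sequence of a rank-one word in the class 𝒦_m, i.e., for each n there are natural numbers 0 ≤ t_{n,1},…,t_{n,m} ≤ m−1 with r_n divisible by m and s_{n,i} = t_{n,⌈mi/r_n⌉} for 0 < i ≤ r_n. Let A_n = {0 ≤ i < |v_n| : v_n(i) = 0}. Then max(A_n) = |v_n| − t_{n−1,m} − t_{n−2,m} − ⋯ − t_{0,m} − 1; in particular |v_n| − max(A_n) ≤ n(m−1) + 1. -/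
open Filter ArithmeticFunction

/-
Each vₙ₊₁ ends with a copy of vₙ followed by the last spacer 1^{s_{n,r_n}}, so the tail of vₙ after
its last 0 is 1^{s_{n-1,r_{n-1}} + ⋯ + s_{0,r_0}}. In the class 𝒦ₘ the last spacer of stage j is
s_{j,r_j} = t_{j,⌈m r_j / r_j⌉} = t_{j,m} ≤ m − 1.
-/

lemma List.getD_replicate_self {α : Type*} (a : α) (c j : ℕ) :
    (List.replicate c a).getD j a = a := by
  rw [List.getD_eq_getElem?_getD, List.getElem?_replicate]
  split <;> rfl

lemma blockMax_zeros_append_false_replicate_true (w : List Bool) (c : ℕ) :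
    blockMax ((Finset.range (w ++ false :: List.replicate c true).length).filter
      (fun i => (w ++ false :: List.replicate c true).getD i true = false)) = w.length := by
  apply le_antisymm
  · refine Finset.sup_le fun i hi => ?_
    rw [Finset.mem_filter] at hi
    by_contra! hlt
    obtain ⟨j, rfl⟩ : ∃ j, i = w.length + (j + 1) := ⟨i - w.length - 1, by omega⟩
    rw [List.getD_append_right _ _ _ _ (by omega), Nat.add_sub_cancel_left,
      List.getD_cons_succ, List.getD_replicate_self] at hi
    exact Bool.noConfusion hi.2
  · refine Finset.le_sup (f := fun n => n) (Finset.mem_filter.2 ⟨?_, ?_⟩) <;> simp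

lemma Nat.mul_add_sub_one_div_self (m : ℕ) {r : ℕ} (hr : 0 < r) : (m * r + r - 1) / r = m := by
  rw [show m * r + r - 1 = r * m + (r - 1) by rw [Nat.add_sub_assoc hr, mul_comm],
    Nat.mul_add_div hr, Nat.div_eq_of_lt (Nat.sub_lt hr one_pos), add_zero]

lemma List.flatMap_range_of_pos {β : Type*} {k : ℕ} (hk : 0 < k) (f : ℕ → List β) :
    (List.range k).flatMap f = (List.range (k - 1)).flatMap f ++ f (k - 1) := by
  obtain ⟨k, rfl⟩ := Nat.exists_eq_add_one_of_ne_zero hk.ne'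
  simp [List.range_succ]

lemma eq_append_false_replicate_sum_last_spacer (r : ℕ → ℕ) (s : ℕ → ℕ → ℕ)
    (v : ℕ → List Bool) (hr : ∀ n, 0 < r n) (hv0 : v 0 = [false])
    (hrec : ∀ n, v (n + 1) =
      (List.range (r n)).flatMap (fun i => v n ++ List.replicate (s n (i + 1)) true)) (n : ℕ) :
    ∃ w : List Bool, v n = w ++ false :: List.replicate (∑ j ∈ Finset.range n, s j (r j)) true := by
  induction n with
  | zero => exact ⟨[], by simp [hv0]⟩
  | succ n ih =>
    obtain ⟨w, hw⟩ := ih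
    refine ⟨(List.range (r n - 1)).flatMap
        (fun i => v n ++ List.replicate (s n (i + 1)) true) ++ w, ?_⟩
    rw [hrec n, List.flatMap_range_of_pos (hr n), Nat.sub_add_cancel (hr n), hw,
      Finset.sum_range_succ, List.replicate_add]
    simp

theorem stmt_11_general (m : ℕ) (hm : 2 ≤ m) (r : ℕ → ℕ) (t : ℕ → ℕ → ℕ) (s : ℕ → ℕ → ℕ)
    (v : ℕ → List Bool) (A : ℕ → Finset ℕ)
    (hr : ∀ n, 1 < r n)
    (ht : ∀ n k, 1 ≤ k → k ≤ m → t n k ≤ m - 1)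
    (hs : ∀ n i, 1 ≤ i → i ≤ r n → s n i = t n ((m * i + r n - 1) / r n))
    (hv0 : v 0 = [false])
    (hrec : ∀ n, v (n + 1) =
      (List.range (r n)).flatMap (fun i => v n ++ List.replicate (s n (i + 1)) true))
    (hA : ∀ n, A n = (Finset.range (v n).length).filter (fun i => (v n).getD i true = false)) :
    ∀ n : ℕ,
      ((blockMax (A n) : ℤ) = ((v n).length : ℤ) - (∑ j ∈ Finset.range n, (t j m : ℤ)) - 1) ∧
      (v n).length - blockMax (A n) ≤ n * (m - 1) + 1 := by
  intro n
  have hlast : ∀ j, s j (r j) = t j m := fun j => by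
    rw [hs j (r j) (hr j).le le_rfl, Nat.mul_add_sub_one_div_self m (Nat.zero_lt_of_lt (hr j))]
  obtain ⟨w, hw⟩ := eq_append_false_replicate_sum_last_spacer r s v
    (fun j => Nat.zero_lt_of_lt (hr j)) hv0 hrec n
  simp only [hlast] at hw
  have hmax : blockMax (A n) = w.length := by
    rw [hA n, hw, blockMax_zeros_append_false_replicate_true]
  have hlen : (v n).length = w.length + ∑ j ∈ Finset.range n, t j m + 1 := by
    simp only [hw, List.length_append, List.length_cons, List.length_replicate]
    omega
  have hsum : ∑ j ∈ Finset.range n, t j m ≤ n * (m - 1) := by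
    simpa using Finset.sum_le_card_nsmul (Finset.range n) _ _ fun j _ => ht j m (by omega) le_rfl
  refine ⟨?_, by omega⟩
  rw [hmax, hlen]
  push_cast
  ring

/-- For generating sequences in the class 𝒦ₘ, the position of the last 0 in vₙ is
|vₙ| − t_{n−1,m} − ⋯ − t_{0,m} − 1; in particular |vₙ| − max Aₙ ≤ n(m−1)+1. -/
theorem stmt_11 (m : ℕ) (hm : 2 ≤ m) (r : ℕ → ℕ) (t : ℕ → ℕ → ℕ) (s : ℕ → ℕ → ℕ)
    (v : ℕ → List Bool) (A : ℕ → Finset ℕ)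
    (hr : ∀ n, 1 < r n) (hdvd : ∀ n, m ∣ r n)
    (ht : ∀ n k, 1 ≤ k → k ≤ m → t n k ≤ m - 1)
    (hs : ∀ n i, 1 ≤ i → i ≤ r n → s n i = t n ((m * i + r n - 1) / r n))
    (hv0 : v 0 = [false])
    (hrec : ∀ n, v (n + 1) =
      (List.range (r n)).flatMap (fun i => v n ++ List.replicate (s n (i + 1)) true))
    (hA : ∀ n, A n = (Finset.range (v n).length).filter (fun i => (v n).getD i true = false)) :
    ∀ n : ℕ,
      ((blockMax (A n) : ℤ) = ((v n).length : ℤ) - (∑ j ∈ Finset.range n, (t j m : ℤ)) - 1) ∧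
      (v n).length - blockMax (A n) ≤ n * (m - 1) + 1 :=
  stmt_11_general m hm r t s v A hr ht hs hv0 hrec hA
end

section
/- Let v_n be a generating sequence of a rank-one word and for n ≥ 1 write v_{n+1} = u_{n,1}⋯u_{n,m} where u_{n,k} = (v_n 1^{t_{n,k}})^{r_n/m} (assuming r_n divisible by m and s_{n,i} = t_{n,⌈mi/r_n⌉}). Let σ_{n,ℓ} = (ℓ|v_n| + t_{n,1} + ⋯ + t_{n,ℓ})·(r_n/m) for 0 ≤ ℓ < m and σ_{n,m} = |v_{n+1}|. Let A_{n+1} be the set of positions of 0s in v_{n+1}. Then for each 0 ≤ ℓ < m, A_{n+1} is a complete congruency class mod |v_n| + t_{n,ℓ+1} on the interval [σ_{n,ℓ}, σ_{n,ℓ+1}), meaning: for every n' ∈ [σ_{n,ℓ}, σ_{n,ℓ+1} − (|v_n| + t_{n,ℓ+1})), n' ∈ A_{n+1} if and only if n' + |v_n| + t_{n,ℓ+1} ∈ A_{n+1}. -/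
open Filter ArithmeticFunction

/-- B is a complete congruency class mod q on the interval [a,b). -/
def IsCCCNat (B : Set ℕ) (q a b : ℕ) : Prop :=
  ∀ n : ℕ, a ≤ n → n + q < b → (n ∈ B ↔ n + q ∈ B)

/-!
Block `ℓ` of `w` is the word `v 1^{t(ℓ+1)}` repeated `r/m` times, so inside that block `w` is
periodic with period `|v| + t(ℓ+1)`, and the block starts at `sig ℓ`, the total length of the
blocks before it. Positions past the end of `w` read as `1` under `getD _ _ true`, so the
membership of `n` in the set of zeros is decided by the letter `w.getD n true` alone.
-/

namespace List

variable {α : Type*}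

lemma getD_flatten_replicate_append_add_length (u C : List α) {N i : ℕ} (d : α)
    (hi : i + u.length < N * u.length) :
    ((replicate N u).flatten ++ C).getD (i + u.length) d =
      ((replicate N u).flatten ++ C).getD i d := by
  obtain ⟨N, rfl⟩ : ∃ N', N = N' + 1 := Nat.exists_eq_succ_of_ne_zero (by rintro rfl; simp at hi)
  have hi' : i < (replicate N u).flatten.length := by
    rw [length_flatten, map_replicate, sum_replicate, smul_eq_mul]
    rw [Nat.add_one_mul] at hi
    omega
  calc ((replicate (N + 1) u).flatten ++ C).getD (i + u.length) d
      = ((replicate N u).flatten ++ C).getD i d := by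
        rw [replicate_succ, flatten_cons, append_assoc,
          getD_append_right _ _ _ _ (Nat.le_add_left _ _), Nat.add_sub_cancel]
    _ = ((replicate (N + 1) u).flatten ++ C).getD i d := by
        rw [replicate_succ', flatten_append, append_assoc, getD_append _ _ _ _ hi',
          getD_append _ _ _ _ hi']

lemma length_flatten_map_range (g : ℕ → List α) (L : ℕ) :
    ((range L).map g).flatten.length = ∑ k ∈ Finset.range L, (g k).length := by
  induction L with
  | zero => simp
  | succ L ih => simp [range_succ, ih, Finset.sum_range_succ]

lemma exists_flatten_map_range_eq_append (g : ℕ → List α) {l m : ℕ} (hl : l < m) :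
    ∃ C, ((range m).map g).flatten = ((range l).map g).flatten ++ (g l ++ C) := by
  obtain ⟨k, rfl⟩ := Nat.exists_eq_add_of_lt hl
  refine ⟨((range k).map fun x => g (l + 1 + x)).flatten, ?_⟩
  rw [Nat.add_right_comm, range_add, range_succ]
  simp [Function.comp_def]

lemma getD_flatten_map_range_add_length (g : ℕ → List α) {u : List α} {N l m n : ℕ} (d : α)
    (hl : l < m) (hg : g l = (replicate N u).flatten)
    (hn : ((range l).map g).flatten.length ≤ n)
    (hnu : n + u.length < ((range l).map g).flatten.length + N * u.length) :
    ((range m).map g).flatten.getD (n + u.length) d = ((range m).map g).flatten.getD n d := by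
  obtain ⟨C, hC⟩ := exists_flatten_map_range_eq_append g hl
  obtain ⟨i, rfl⟩ := Nat.exists_eq_add_of_le hn
  rw [hC, hg, Nat.add_assoc, getD_append_right _ _ _ _ (Nat.le_add_right _ _),
    getD_append_right _ _ _ _ (Nat.le_add_right _ _), Nat.add_sub_cancel_left,
    Nat.add_sub_cancel_left]
  exact getD_flatten_replicate_append_add_length u C d (by omega)

end List

lemma isCCCNat_zeros_of_getD_add (w : List Bool) {q a b : ℕ}
    (h : ∀ n, a ≤ n → n + q < b → w.getD (n + q) true = w.getD n true) :
    IsCCCNat {i : ℕ | i < w.length ∧ w.getD i true = false} q a b := by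
  have mem_zeros : ∀ i, i ∈ {i : ℕ | i < w.length ∧ w.getD i true = false} ↔
      w.getD i true = false := by
    refine fun i => ⟨And.right, fun hi => ⟨?_, hi⟩⟩
    by_contra! hlen
    rw [List.getD_eq_default _ _ hlen] at hi
    simp at hi
  intro n hn hnq
  rw [mem_zeros, mem_zeros, h n hn hnq]

lemma sum_range_add_one_eq_sum_Icc (t : ℕ → ℕ) (L : ℕ) :
    ∑ k ∈ Finset.range L, t (k + 1) = ∑ j ∈ Finset.Icc 1 L, t j := by
  rw [Finset.range_eq_Ico, Finset.sum_Ico_add' t, ← Finset.Ico_add_one_right_eq_Icc]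

theorem stmt_12_general (m rn : ℕ)
    (v : List Bool) (t : ℕ → ℕ) (w : List Bool)
    (hw : w = (List.range m).flatMap
      (fun k => (List.range (rn / m)).flatMap (fun _ => v ++ List.replicate (t (k + 1)) true)))
    (sig : ℕ → ℕ)
    (hsig : ∀ l, l < m → sig l = (l * v.length + ∑ j ∈ Finset.Icc 1 l, t j) * (rn / m))
    (hsigm : sig m = w.length) :
    ∀ l, l < m →
      IsCCCNat {i : ℕ | i < w.length ∧ w.getD i true = false}
        (v.length + t (l + 1)) (sig l) (sig (l + 1)) := by
  intro l hl
  set N := rn / m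
  set u : ℕ → List Bool := fun k => v ++ List.replicate (t (k + 1)) true
  set g : ℕ → List Bool := fun k => (List.replicate N (u k)).flatten
  have hw' : w = ((List.range m).map g).flatten := by
    simp [hw, List.flatMap_def, g, u, List.map_const']
  have hlen : ∀ L, ((List.range L).map g).flatten.length =
      (L * v.length + ∑ j ∈ Finset.Icc 1 L, t j) * N := fun L => by
    rw [List.length_flatten_map_range, ← sum_range_add_one_eq_sum_Icc, mul_comm, mul_add,
      Finset.mul_sum]
    simp [g, u, Finset.sum_add_distrib, mul_add, mul_left_comm]
  have hul : (u l).length = v.length + t (l + 1) := by simp [u]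
  have hsig_succ : sig (l + 1) = sig l + N * (u l).length := by
    have hsig_succ' :
        sig (l + 1) = ((l + 1) * v.length + ∑ j ∈ Finset.Icc 1 (l + 1), t j) * N := by
      rcases (show l + 1 ≤ m from hl).lt_or_eq with h | h
      · exact hsig _ h
      · rw [h, hsigm, hw', hlen]
    rw [hsig_succ', hsig l hl, Finset.sum_Icc_succ_top (Nat.le_add_left 1 l), hul]
    ring
  refine isCCCNat_zeros_of_getD_add w fun n hn hnq => ?_
  rw [hw', ← hul]
  exact List.getD_flatten_map_range_add_length g true hl rfl (by rwa [hlen, ← hsig l hl])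
    (by rwa [hlen, ← hsig l hl, ← hsig_succ, hul])

/-- On each block of a generalized-Katok word v_{n+1} = ∏ₖ (vₙ1^{tₖ})^{rₙ/m},
the set of 0-positions is a complete congruency class mod |vₙ| + t_{ℓ+1}
on [sig ℓ, sig (ℓ+1)). -/
theorem stmt_12 (m rn : ℕ) (hm : 1 ≤ m) (hdvd : m ∣ rn) (hrn : 0 < rn)
    (v : List Bool) (hv : v ≠ []) (t : ℕ → ℕ) (w : List Bool)
    (hw : w = (List.range m).flatMap
      (fun k => (List.range (rn / m)).flatMap (fun _ => v ++ List.replicate (t (k + 1)) true)))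
    (sig : ℕ → ℕ)
    (hsig : ∀ l, l < m → sig l = (l * v.length + ∑ j ∈ Finset.Icc 1 l, t j) * (rn / m))
    (hsigm : sig m = w.length) :
    ∀ l, l < m →
      IsCCCNat {i : ℕ | i < w.length ∧ w.getD i true = false}
        (v.length + t (l + 1)) (sig l) (sig (l + 1)) :=
  stmt_12_general m rn v t w hw sig hsig hsigm
end

section
/- Assume the Kanigowski–Lemańczyk–Radziwiłł short-interval estimate. Let M ⊆ ℤ be a set that is a finite union M = ⋃_{ℓ=0}^{m−1} C_ℓ where each C_ℓ is a union of disjoint arithmetic progressions of common difference q_ℓ, each progression contained in an interval of length at most Λ, with the intervals containing distinct progressions of all the C_ℓ pairwise disjoint and separated, and suppose the q_ℓ and a parameter L ≥ L₀ satisfy ∑_{p|q_ℓ} 1/p ≤ (1−ε)∑_{p≤L} 1/p for each ℓ, with L·q_ℓ ≤ εΛ/2. Then limsup_{N→∞} |(1/N)∑_{n∈M,1≤n≤N} μ(n)| ≤ (m+2)ε. -/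
open Filter ArithmeticFunction

/-! Fix a family `ℓ` and cut `[z, ∞)` into blocks of length `w = L q_ℓ`, where the shift `z` is
supplied by the KLR estimate. A block inside the span of one progression meets the family in a
single residue class mod `q_ℓ`, so its Möbius sum is bounded by the block's KLR term; a block
missing the family contributes nothing; every other block contains an endpoint of a progression
and is bounded trivially by `w ≤ εΛ/2`. The progressions of all families are `Λ`-separated, so
only about `N / Λ` of them meet `[0, N]`, and the bad blocks of all families together cost about
`εN`. Adding `εN` per family from the KLR sums gives `(m + 1) εN + O(1)`. -/

open Finset Function

open scoped Classical in
noncomputable def mobiusOn (S : Set ℤ) (n : ℕ) : ℝ :=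
  if (n : ℤ) ∈ S then (moebius n : ℝ) else 0

noncomputable def mobiusResidueMass (I : Finset ℕ) (q : ℕ) : ℝ :=
  ∑ a ∈ range q, |∑ n ∈ I.filter (fun n => n % q = a), (moebius n : ℝ)|

def progression (b : ℤ) (q len : ℕ) : Set ℤ :=
  {x : ℤ | ∃ k : ℕ, k < len ∧ x = b + (k : ℤ) * (q : ℤ)}

def SeparatedBy {ι : Type*} (Lam : ℕ) (f : ι → ℤ) : Prop :=
  Pairwise fun i j => f i + Lam ≤ f j ∨ f j + Lam ≤ f i

lemma mobiusSum_eq (M : Set ℤ) (N : ℕ) :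
    mobiusSum M N = (N : ℝ)⁻¹ * ∑ n ∈ Icc 1 N, mobiusOn M n := rfl

lemma abs_mobiusOn_le_one (S : Set ℤ) (n : ℕ) : |mobiusOn S n| ≤ 1 := by
  unfold mobiusOn
  split_ifs
  · exact_mod_cast abs_moebius_le_one
  · simp

lemma mobiusOn_iUnion {ι : Type*} [Fintype ι] {S : ι → Set ℤ} (hS : Pairwise (Disjoint on S))
    (n : ℕ) : mobiusOn (⋃ i, S i) n = ∑ i, mobiusOn (S i) n := by
  by_cases h : (n : ℤ) ∈ ⋃ i, S i
  · obtain ⟨i, hi⟩ := Set.mem_iUnion.1 h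
    rw [sum_eq_single i (fun j _ hji => ?_) (by simp)]
    · simp [mobiusOn, h, hi]
    · simp [mobiusOn, Set.disjoint_left.1 (hS hji.symm) hi]
  · simp only [Set.mem_iUnion, not_exists] at h
    simp [mobiusOn, h]

lemma mobiusResidueMass_nonneg (I : Finset ℕ) (q : ℕ) : 0 ≤ mobiusResidueMass I q :=
  sum_nonneg fun _ _ => abs_nonneg _

section Counting

variable {ι : Type*}

lemma abs_sum_le_card_of_abs_le_one {f : ι → ℝ} (hf : ∀ i, |f i| ≤ 1) (s : Finset ι) :
    |∑ i ∈ s, f i| ≤ #s :=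
  calc |∑ i ∈ s, f i| ≤ ∑ i ∈ s, |f i| := abs_sum_le_sum_abs _ _
    _ ≤ #s := by simpa using sum_le_card_nsmul s _ 1 fun i _ => hf i

lemma abs_sum_sub_sum_le_card_sdiff_add_card_sdiff [DecidableEq ι] {f : ι → ℝ} (hf : ∀ i, |f i| ≤ 1)
    (s t : Finset ι) : |∑ i ∈ s, f i - ∑ i ∈ t, f i| ≤ #(s \ t) + #(t \ s) := by
  rw [← sum_sdiff_sub_sum_sdiff]
  exact (abs_sub _ _).trans
    (add_le_add (abs_sum_le_card_of_abs_le_one hf _) (abs_sum_le_card_of_abs_le_one hf _))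

lemma abs_sum_Icc_sub_sum_Ico_le {f : ℕ → ℝ} (hf : ∀ n, |f n| ≤ 1) {N z w : ℕ} (hz : z < w) :
    |∑ n ∈ Icc 1 N, f n - ∑ n ∈ Ico z (z + (N / w + 1) * w), f n| ≤ 3 * w := by
  have hTw : N < (N / w + 1) * w ∧ (N / w + 1) * w ≤ N + w := by
    have := Nat.lt_div_mul_add (a := N) (by omega : 0 < w)
    have := Nat.div_mul_le_self N w
    constructor <;> linarith [add_one_mul (N / w) w]
  have h₁ : Icc 1 N \ Ico z (z + (N / w + 1) * w) ⊆ Ico 1 z := by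
    intro n; simp only [Finset.mem_sdiff, Finset.mem_Icc, Finset.mem_Ico]; omega
  have h₂ : Ico z (z + (N / w + 1) * w) \ Icc 1 N
      ⊆ Ico z (z + 1) ∪ Ico (N + 1) (z + (N / w + 1) * w) := by
    intro n; simp only [Finset.mem_sdiff, Finset.mem_Icc, Finset.mem_Ico, Finset.mem_union]; omega
  have hcard := (card_le_card h₂).trans (card_union_le _ _)
  have := card_le_card h₁
  simp only [Nat.card_Ico] at hcard this
  refine (abs_sum_sub_sum_le_card_sdiff_add_card_sdiff hf _ _).trans ?_
  exact_mod_cast (by omega : _ ≤ 3 * w)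

lemma sum_Ico_eq_sum_range_sum_Ico {M : Type*} [AddCommMonoid M] (f : ℕ → M) (z w T : ℕ) :
    ∑ n ∈ Ico z (z + T * w), f n
      = ∑ j ∈ range T, ∑ n ∈ Ico (z + j * w) (z + (j + 1) * w), f n := by
  induction T with
  | zero => simp
  | succ T ih =>
    rw [sum_range_succ, ← ih, sum_Ico_consecutive _ (by omega) (by rw [add_one_mul]; omega)]

lemma SeparatedBy.eq_of_mem_Ico {Lam : ℕ} {f : ι → ℤ} (hf : SeparatedBy Lam f) {i j : ι} {x : ℤ}
    (hi : x ∈ Set.Ico (f i) (f i + Lam)) (hj : x ∈ Set.Ico (f j) (f j + Lam)) : i = j := by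
  by_contra hij
  rcases hf hij with h | h <;> simp only [Set.mem_Ico] at hi hj <;> omega

lemma SeparatedBy.exists_finset_card_mul_le {Lam : ℕ} {f : ι → ℤ} (hf : SeparatedBy Lam f)
    (hLam : 0 < Lam) (a : ℤ) (X : ℕ) :
    ∃ s : Finset ι, (∀ i, f i ∈ Set.Ico a (a + X) → i ∈ s) ∧ Lam * #s ≤ X + Lam := by
  have hinj : Function.Injective f := fun i j hij =>
    hf.eq_of_mem_Ico (x := f i) (by simp [hLam]) (by simp [hij, hLam])
  refine ⟨(Ico a (a + X)).preimage f hinj.injOn, fun i hi => by simpa using hi, ?_⟩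
  set s := (Ico a (a + X)).preimage f hinj.injOn
  have hdisj : (s : Set ι).PairwiseDisjoint fun i => Ico (f i) (f i + Lam) :=
    fun i _ j _ hij => disjoint_left.2 fun x hxi hxj =>
      hij (hf.eq_of_mem_Ico (by simpa using hxi) (by simpa using hxj))
  have hsub : s.biUnion (fun i => Ico (f i) (f i + Lam)) ⊆ Ico a (a + X + Lam) := by
    intro x hx
    obtain ⟨i, hi, hx⟩ := mem_biUnion.1 hx
    simp only [s, mem_preimage, mem_Ico] at hi hx ⊢
    omega
  calc Lam * #s = ∑ i ∈ s, #(Ico (f i) (f i + Lam)) := by simp [Int.card_Ico, mul_comm]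
    _ = #(s.biUnion fun i => Ico (f i) (f i + Lam)) := (card_biUnion hdisj).symm
    _ ≤ #(Ico a (a + X + Lam)) := card_le_card hsub
    _ = X + Lam := by simp [Int.card_Ico]; omega

end Counting

section Progressions

lemma progression_subset_Ico {b : ℤ} {q len : ℕ} (hq : 0 < q) :
    progression b q len ⊆ Set.Ico b (b + (len : ℤ) * q) := by
  rintro x ⟨k, hk, rfl⟩
  have : (k : ℤ) + 1 ≤ len := by exact_mod_cast hk
  constructor <;> nlinarith

lemma progression_subset_Ico_add {b : ℤ} {q len Lam : ℕ} (hq : 0 < q) (h : len * q ≤ Lam) :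
    progression b q len ⊆ Set.Ico b (b + Lam) :=
  (progression_subset_Ico hq).trans (Set.Ico_subset_Ico_right (by norm_cast; omega))

lemma mem_progression_iff_emod {b x : ℤ} {q len : ℕ} (hq : 0 < q)
    (hx : x ∈ Set.Ico b (b + (len : ℤ) * q)) : x ∈ progression b q len ↔ x % q = b % q := by
  refine ⟨fun ⟨k, _, hk⟩ => hk ▸ Int.add_mul_emod_self_right _ _ _, fun h => ?_⟩
  obtain ⟨t, ht⟩ := (Int.ModEq.dvd h.symm : (q : ℤ) ∣ x - b)
  have hq' : (0 : ℤ) < q := by exact_mod_cast hq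
  obtain ⟨hbx, hxb⟩ := hx
  lift t to ℕ using by nlinarith
  exact ⟨t, by exact_mod_cast (by nlinarith : (t : ℤ) < len), by linarith⟩

variable {ι : Type*} {b : ι → ℤ} {q len : ι → ℕ} {Lam : ℕ}

lemma SeparatedBy.eq_of_mem_progression (hsep : SeparatedBy Lam b) (hq : ∀ i, 0 < q i)
    (hprog : ∀ i, len i * q i ≤ Lam) {i j : ι} {x : ℤ}
    (hi : x ∈ progression (b i) (q i) (len i)) (hj : x ∈ progression (b j) (q j) (len j)) :
    i = j :=
  hsep.eq_of_mem_Ico (progression_subset_Ico_add (hq i) (hprog i) hi)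
    (progression_subset_Ico_add (hq j) (hprog j) hj)

end Progressions

section Family

variable {b : ℤ → ℤ} {q Lam : ℕ} {len : ℤ → ℕ}

lemma mem_iUnion_progression_iff_emod (hq : 0 < q) (hprog : ∀ i, len i * q ≤ Lam)
    (hsep : SeparatedBy Lam b) {i : ℤ} {x : ℤ} (hx : x ∈ Set.Ico (b i) (b i + (len i : ℤ) * q)) :
    x ∈ ⋃ j, progression (b j) q (len j) ↔ x % q = b i % q := by
  rw [← mem_progression_iff_emod hq hx, Set.mem_iUnion]
  refine ⟨fun ⟨j, hj⟩ => ?_, fun h => ⟨i, h⟩⟩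
  have hxi : x ∈ Set.Ico (b i) (b i + Lam) := by
    have := hprog i
    zify at this
    exact ⟨hx.1, by linarith [hx.2]⟩
  rwa [hsep.eq_of_mem_Ico hxi (progression_subset_Ico_add hq (hprog j) hj)]

lemma abs_sum_mobiusOn_Ico_le_or_exists_endpoint (hq : 0 < q) (hprog : ∀ i, len i * q ≤ Lam)
    (hsep : SeparatedBy Lam b) (s t : ℕ) :
    |∑ n ∈ Ico s t, mobiusOn (⋃ i, progression (b i) q (len i)) n|
        ≤ mobiusResidueMass (Ico s t) q ∨
      ∃ i p, (p = b i ∨ p = b i + len i * q - 1) ∧ p ∈ Set.Ico (b i) (b i + Lam) ∧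
        p ∈ Set.Ico (s : ℤ) t := by
  by_cases hspan : ∃ i, b i ≤ s ∧ (t : ℤ) ≤ b i + len i * q
  · left
    obtain ⟨i, hs, ht⟩ := hspan
    have hr := Int.emod_nonneg (b i) (by exact_mod_cast hq.ne' : (q : ℤ) ≠ 0)
    have hr' := Int.emod_lt_of_pos (b i) (by exact_mod_cast hq : (0 : ℤ) < q)
    have hmem : ∀ n ∈ Ico s t, (n : ℤ) ∈ ⋃ j, progression (b j) q (len j) ↔
        n % q = (b i % q).toNat := by
      intro n hn
      rw [Finset.mem_Ico] at hn
      rw [mem_iUnion_progression_iff_emod hq hprog hsep (i := i) ⟨by omega, by omega⟩,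
        ← Int.natCast_mod]
      omega
    have hres : ∑ n ∈ Ico s t, mobiusOn (⋃ j, progression (b j) q (len j)) n
        = ∑ n ∈ (Ico s t).filter (fun n => n % q = (b i % q).toNat), (moebius n : ℝ) := by
      rw [sum_filter]
      exact sum_congr rfl fun n hn => by simp only [mobiusOn, hmem n hn]
    rw [hres]
    exact single_le_sum (f := fun a => |∑ n ∈ (Ico s t).filter (fun n => n % q = a),
      (moebius n : ℝ)|) (fun _ _ => abs_nonneg _) (mem_range.2 (by omega))
  push Not at hspan
  by_cases hmeets : ∃ n ∈ Ico s t, (n : ℤ) ∈ ⋃ i, progression (b i) q (len i)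
  · right
    obtain ⟨n, hn, hnA⟩ := hmeets
    obtain ⟨i, hni⟩ := Set.mem_iUnion.1 hnA
    have hspan_i := progression_subset_Ico hq hni
    have hprog_i := hprog i
    zify at hprog_i
    have := hspan i
    simp only [Finset.mem_Ico, Set.mem_Ico] at hn hspan_i ⊢
    by_cases h : b i ≤ s
    · exact ⟨i, _, Or.inr rfl, ⟨by omega, by omega⟩, by omega, by omega⟩
    · exact ⟨i, _, Or.inl rfl, ⟨le_rfl, by omega⟩, by omega, by omega⟩
  · left
    push Not at hmeets
    rw [sum_eq_zero fun n hn => by simp [mobiusOn, hmeets n hn], abs_zero]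
    exact mobiusResidueMass_nonneg _ _

lemma abs_sum_mobiusOn_Ico_le_of_forall_endpoint_not_mem (hq : 0 < q)
    (hprog : ∀ i, len i * q ≤ Lam) (hsep : SeparatedBy Lam b) {s t X : ℕ} (htX : t ≤ X)
    (S : Finset ℤ) (hS : ∀ i, b i ∈ Set.Ico (-Lam : ℤ) X → i ∈ S)
    (hE : ∀ p ∈ S.image b ∪ S.image fun i => b i + len i * q - 1, p ∉ Set.Ico (s : ℤ) t) :
    |∑ n ∈ Ico s t, mobiusOn (⋃ i, progression (b i) q (len i)) n|
      ≤ mobiusResidueMass (Ico s t) q := by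
  refine (abs_sum_mobiusOn_Ico_le_or_exists_endpoint hq hprog hsep s t).resolve_right ?_
  rintro ⟨i, p, hp, hpi, hpst⟩
  simp only [Set.mem_Ico] at hpi hpst
  have hiS : i ∈ S := hS i ⟨by omega, by omega⟩
  refine hE p ?_ ⟨hpst.1, hpst.2⟩
  rcases hp with rfl | rfl
  · exact mem_union_left _ (mem_image_of_mem _ hiS)
  · exact mem_union_right _ (mem_image_of_mem _ hiS)

lemma sum_abs_sum_mobiusOn_blocks_le (hq : 0 < q) (hprog : ∀ i, len i * q ≤ Lam)
    (hsep : SeparatedBy Lam b) {N z w : ℕ} (hz : z < w) (S : Finset ℤ)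
    (hS : ∀ i, b i ∈ Set.Ico (-Lam : ℤ) (N + 2 * w) → i ∈ S) :
    ∑ j ∈ range (N / w + 1),
        |∑ n ∈ Ico (z + j * w) (z + (j + 1) * w), mobiusOn (⋃ i, progression (b i) q (len i)) n|
      ≤ ∑ j ∈ range (N / w + 1), mobiusResidueMass (Ico (z + j * w) (z + (j + 1) * w)) q
        + 2 * w * #S := by
  have hTw : (N / w + 1) * w ≤ N + w := by
    rw [add_one_mul]; exact Nat.add_le_add_right (Nat.div_mul_le_self N w) w
  -- a block containing the endpoint `p` is the one with index `(p - z) / w`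
  set bad := (S.image b ∪ S.image fun i => b i + len i * q - 1).image
    fun p : ℤ => (p.toNat - z) / w
  have hbad : #bad ≤ 2 * #S := by
    have h₁ := card_image_le (s := S) (f := b)
    have h₂ := card_image_le (s := S) (f := fun i => b i + len i * q - 1)
    exact card_image_le.trans ((card_union_le _ _).trans (by omega))
  have hblock : ∀ j ∈ range (N / w + 1),
      |∑ n ∈ Ico (z + j * w) (z + (j + 1) * w), mobiusOn (⋃ i, progression (b i) q (len i)) n|
        ≤ mobiusResidueMass (Ico (z + j * w) (z + (j + 1) * w)) q
          + if j ∈ bad then (w : ℝ) else 0 := by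
    intro j hj
    split_ifs with hj_bad
    · calc _ ≤ (#(Ico (z + j * w) (z + (j + 1) * w)) : ℝ) :=
            abs_sum_le_card_of_abs_le_one (abs_mobiusOn_le_one _) _
        _ = w := by rw [Nat.card_Ico, add_one_mul]; simp
        _ ≤ _ := le_add_of_nonneg_left (mobiusResidueMass_nonneg _ _)
    · have : (j + 1) * w ≤ (N / w + 1) * w := Nat.mul_le_mul_right w (mem_range.1 hj)
      rw [add_zero]
      refine abs_sum_mobiusOn_Ico_le_of_forall_endpoint_not_mem hq hprog hsep
        (X := N + 2 * w) (by omega) S (by exact_mod_cast hS) fun p hp hpj => hj_bad ?_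
      simp only [Set.mem_Ico] at hpj
      exact mem_image.2 ⟨p, hp, Nat.div_eq_of_lt_le (by omega) (by omega)⟩
  calc _ ≤ ∑ j ∈ range (N / w + 1), (mobiusResidueMass (Ico (z + j * w) (z + (j + 1) * w)) q
          + if j ∈ bad then (w : ℝ) else 0) := sum_le_sum hblock
    _ = ∑ j ∈ range (N / w + 1), mobiusResidueMass (Ico (z + j * w) (z + (j + 1) * w)) q
          + #(range (N / w + 1) ∩ bad) * w := by
      rw [sum_add_distrib, sum_ite_mem, sum_const, nsmul_eq_mul]
    _ ≤ _ := by
      have : (#(range (N / w + 1) ∩ bad) : ℝ) ≤ 2 * #S := by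
        exact_mod_cast (card_le_card inter_subset_right).trans hbad
      nlinarith [(Nat.cast_nonneg w : (0 : ℝ) ≤ w)]

lemma abs_sum_mobiusOn_iUnion_progression_le (hq : 0 < q) (hprog : ∀ i, len i * q ≤ Lam)
    (hsep : SeparatedBy Lam b) {N z w : ℕ} (hz : z < w) (S : Finset ℤ)
    (hS : ∀ i, b i ∈ Set.Ico (-Lam : ℤ) (N + 2 * w) → i ∈ S) :
    |∑ n ∈ Icc 1 N, mobiusOn (⋃ i, progression (b i) q (len i)) n|
      ≤ ∑ j ∈ range (N / w + 1), mobiusResidueMass (Ico (z + j * w) (z + (j + 1) * w)) q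
        + 3 * w + 2 * w * #S := by
  have hwindow := abs_sum_Icc_sub_sum_Ico_le
    (abs_mobiusOn_le_one (⋃ i, progression (b i) q (len i))) (N := N) hz
  rw [sum_Ico_eq_sum_range_sum_Ico] at hwindow
  have hblocks := (abs_sum_le_sum_abs _ _).trans
    (sum_abs_sum_mobiusOn_blocks_le hq hprog hsep hz S hS)
  linarith [abs_sub_abs_le_abs_sub (∑ n ∈ Icc 1 N, mobiusOn (⋃ i, progression (b i) q (len i)) n)
    (∑ j ∈ range (N / w + 1), ∑ n ∈ Ico (z + j * w) (z + (j + 1) * w),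
      mobiusOn (⋃ i, progression (b i) q (len i)) n)]

end Family

lemma abs_sum_mobiusOn_iUnion_iUnion_progression_le {m : ℕ} {q : Fin m → ℕ} {b : Fin m → ℤ → ℤ}
    {len : Fin m → ℤ → ℕ} {Lam : ℕ} (hq : ∀ l, 0 < q l) (hprog : ∀ l i, len l i * q l ≤ Lam)
    (hsep : SeparatedBy Lam fun p : Fin m × ℤ => b p.1 p.2) (hLam : 0 < Lam) {ε : ℝ} (hε : 0 ≤ ε)
    {w z : Fin m → ℕ} (hz : ∀ l, z l < w l) (hwLam : ∀ l, 2 * (w l : ℝ) ≤ ε * Lam) {N : ℕ}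
    (hK : ∀ l, ∑ j ∈ range (N / w l + 1),
      mobiusResidueMass (Ico (z l + j * w l) (z l + (j + 1) * w l)) (q l) ≤ ε * N) :
    |∑ n ∈ Icc 1 N, mobiusOn (⋃ l, ⋃ i, progression (b l i) (q l) (len l i)) n|
      ≤ (m + 1) * ε * N + (3 * ∑ l, (w l : ℝ) + ε * (2 * ∑ l, (w l : ℝ) + 2 * Lam)) := by
  set W := ∑ l, w l
  obtain ⟨S, hS, hScard⟩ := hsep.exists_finset_card_mul_le hLam (-Lam) (N + 2 * W + Lam)
  have hfamily : ∀ l, |∑ n ∈ Icc 1 N, mobiusOn (⋃ i, progression (b l i) (q l) (len l i)) n|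
      ≤ ε * N + 3 * w l + ε * Lam * #(S.filter (·.1 = l)) := by
    intro l
    have hsep_l : SeparatedBy Lam (b l) := fun i j hij => @hsep (l, i) (l, j) (by simpa using hij)
    have hS_l : ∀ i, b l i ∈ Set.Ico (-Lam : ℤ) (N + 2 * w l) →
        i ∈ (S.filter (·.1 = l)).image Prod.snd := by
      intro i hi
      have hwW : w l ≤ W := single_le_sum (fun _ _ => Nat.zero_le _) (mem_univ l)
      refine mem_image.2 ⟨(l, i), mem_filter.2 ⟨hS _ ⟨hi.1, ?_⟩, rfl⟩, rfl⟩
      have := hi.2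
      push_cast
      omega
    have hcard : (#((S.filter (·.1 = l)).image Prod.snd) : ℝ) ≤ #(S.filter (·.1 = l)) := by
      exact_mod_cast card_image_le
    refine (abs_sum_mobiusOn_iUnion_progression_le (hq l) (hprog l) hsep_l (hz l) _ hS_l).trans ?_
    nlinarith [hK l, hwLam l, (#((S.filter (·.1 = l)).image Prod.snd)).cast_nonneg (α := ℝ)]
  have hdisj : Pairwise (Disjoint on fun l => ⋃ i, progression (b l i) (q l) (len l i)) := by
    intro l l' hll'
    refine Set.disjoint_left.2 fun x hx hx' => hll' ?_
    obtain ⟨i, hi⟩ := Set.mem_iUnion.1 hx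
    obtain ⟨i', hi'⟩ := Set.mem_iUnion.1 hx'
    exact congrArg Prod.fst (hsep.eq_of_mem_progression (q := fun p => q p.1)
      (len := fun p => len p.1 p.2) (i := (l, i)) (j := (l', i')) (fun p => hq p.1)
      (fun p => hprog p.1 p.2) hi hi')
  have hfibers : ∑ l, (#(S.filter (·.1 = l)) : ℝ) = #S := by
    exact_mod_cast (card_eq_sum_card_fiberwise fun _ _ => mem_univ _).symm
  have hScard' : (Lam : ℝ) * #S ≤ N + 2 * ∑ l, (w l : ℝ) + 2 * Lam := by
    rw [← Nat.cast_sum]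
    exact_mod_cast (by omega : Lam * #S ≤ N + 2 * W + 2 * Lam)
  calc _ = |∑ l, ∑ n ∈ Icc 1 N, mobiusOn (⋃ i, progression (b l i) (q l) (len l i)) n| := by
        simp only [mobiusOn_iUnion hdisj]
        rw [sum_comm]
    _ ≤ ∑ l, (ε * N + 3 * w l + ε * Lam * #(S.filter (·.1 = l))) :=
        (abs_sum_le_sum_abs _ _).trans (sum_le_sum fun l _ => hfamily l)
    _ = m * ε * N + 3 * ∑ l, (w l : ℝ) + ε * (Lam * #S) := by
        rw [sum_add_distrib, sum_add_distrib, ← mul_sum, ← mul_sum, ← mul_sum, hfibers, sum_const,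
          card_univ, Fintype.card_fin, nsmul_eq_mul]
        ring
    _ ≤ _ := by nlinarith [mul_le_mul_of_nonneg_left hScard' hε]

lemma limsup_abs_mobiusSum_le {M : Set ℤ} {c C δ : ℝ} (hδ : 0 < δ) {N₀ : ℕ}
    (h : ∀ N, N₀ ≤ N → |∑ n ∈ Icc 1 N, mobiusOn M n| ≤ c * N + C) :
    limsup (fun N : ℕ => |mobiusSum M N|) atTop ≤ c + δ := by
  refine limsup_le_of_le (isCoboundedUnder_le_of_le atTop fun N => abs_nonneg _) ?_
  filter_upwards [eventually_ge_atTop (max N₀ 1),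
    (tendsto_const_div_atTop_nhds_zero_nat C).eventually (eventually_le_nhds hδ)] with N hN hC
  have hNpos : (0 : ℝ) < N := by exact_mod_cast (le_max_right N₀ 1).trans hN
  rw [mobiusSum_eq, abs_mul, abs_inv, Nat.abs_cast, inv_mul_le_iff₀ hNpos]
  have := (div_le_iff₀ hNpos).1 hC
  linarith [h N ((le_max_left N₀ 1).trans hN)]

theorem stmt_19_general (ε : ℝ) (hε0 : 0 < ε)
    (L₀ : ℕ) (hKLR : KLRBody ε L₀) (L : ℕ) (hL : L₀ ≤ L)
    (m : ℕ) (q : Fin m → ℕ) (b : Fin m → ℤ → ℤ) (len : Fin m → ℤ → ℕ) (Lam : ℕ)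
    (hq : ∀ l, 1 ≤ q l)
    (hprog : ∀ l j, len l j * q l ≤ Lam)
    (hsep : ∀ l j l' j', (l, j) ≠ (l', j') →
      b l j + (Lam : ℤ) ≤ b l' j' ∨ b l' j' + (Lam : ℤ) ≤ b l j)
    (hprime : ∀ l, (∑ p ∈ (q l).primeFactors, (1 : ℝ) / p) ≤
      (1 - ε) * ∑ p ∈ (Finset.range (L + 1)).filter Nat.Prime, (1 : ℝ) / p)
    (hLq : ∀ l, ((L * q l : ℕ) : ℝ) ≤ ε * Lam / 2)
    (M : Set ℤ)
    (hM : M = ⋃ l : Fin m, ⋃ j : ℤ,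
      {x : ℤ | ∃ k : ℕ, k < len l j ∧ x = b l j + (k : ℤ) * (q l : ℤ)}) :
    limsup (fun N : ℕ => |mobiusSum M N|) atTop ≤ (m + 2) * ε := by
  rcases isEmpty_or_nonempty (Fin m) with hm | ⟨⟨l₀⟩⟩
  · simp only [mobiusSum, hM, Set.iUnion_of_empty, Set.mem_empty_iff_false, if_false,
      sum_const_zero, mul_zero, abs_zero, limsup_const]
    positivity
  choose N₀ hN₀ using fun l => hKLR L hL (q l) (hq l) (hprime l)
  have hLam : 0 < Lam := by
    obtain ⟨z, hz, -⟩ := hN₀ l₀ (N₀ l₀) le_rfl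
    have hw : (0 : ℝ) < (L * q l₀ : ℕ) := by exact_mod_cast z.zero_le.trans_lt hz
    exact_mod_cast pos_of_mul_pos_right (by linarith [hLq l₀] : (0 : ℝ) < ε * Lam) hε0.le
  have hsep' : SeparatedBy Lam fun p : Fin m × ℤ => b p.1 p.2 := fun p p' h => hsep _ _ _ _ h
  refine (limsup_abs_mobiusSum_le (c := (m + 1) * ε) (C := ?C) hε0 (N₀ := univ.sup N₀)
    fun N hN => ?bound).trans_eq (by ring)
  case bound =>
    choose z hz hK using fun l => hN₀ l N ((le_sup (mem_univ l)).trans hN)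
    rw [hM]
    exact abs_sum_mobiusOn_iUnion_iUnion_progression_le hq hprog hsep' hLam hε0.le hz
      (fun l => by linarith [hLq l]) hK

/-- Abstract core estimate of Theorem 3.1: if M is a finite union of families of
arithmetic progressions with m common differences q_ℓ, each progression lying in
an interval of length Lam, the intervals pairwise disjoint and Lam-separated, and the
KLR estimate applies to each q_ℓ with a common L satisfying L·q_ℓ ≤ εLam/2, then
the averaged Möbius sum over M has limsup at most (m+2)ε. -/
theorem stmt_19 (ε : ℝ) (hε0 : 0 < ε) (hε1 : ε < 1 / 100)
    (L₀ : ℕ) (hKLR : KLRBody ε L₀) (L : ℕ) (hL : L₀ ≤ L)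
    (m : ℕ) (q : Fin m → ℕ) (b : Fin m → ℤ → ℤ) (len : Fin m → ℤ → ℕ) (Lam : ℕ)
    (hq : ∀ l, 1 ≤ q l)
    (hprog : ∀ l j, len l j * q l ≤ Lam)
    (hsep : ∀ l j l' j', (l, j) ≠ (l', j') →
      b l j + (Lam : ℤ) ≤ b l' j' ∨ b l' j' + (Lam : ℤ) ≤ b l j)
    (hprime : ∀ l, (∑ p ∈ (q l).primeFactors, (1 : ℝ) / p) ≤
      (1 - ε) * ∑ p ∈ (Finset.range (L + 1)).filter Nat.Prime, (1 : ℝ) / p)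
    (hLq : ∀ l, ((L * q l : ℕ) : ℝ) ≤ ε * Lam / 2)
    (M : Set ℤ)
    (hM : M = ⋃ l : Fin m, ⋃ j : ℤ,
      {x : ℤ | ∃ k : ℕ, k < len l j ∧ x = b l j + (k : ℤ) * (q l : ℤ)}) :
    limsup (fun N : ℕ => |mobiusSum M N|) atTop ≤ (m + 2) * ε :=
  stmt_19_general ε hε0 L₀ hKLR L hL m q b len Lam hq hprog hsep hprime hLq M hM
end
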